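/- arXiv:math/0505302 — 3 statements merged into one kernel-verified Lean document; each statement's English description precedes it below -/
import Mathlib

section
/- Let H be a complex Hilbert space, (P_k)_{k∈I} mutually orthogonal projections on H, and (a_k) a finitely supported family of bounded operators such that for each k there is a nonnegative real c_k with P_k^⊥ a_k^* a_k P_k^⊥ = c_k · P_k^⊥, where P_k^⊥ = 1 − P_k. Then ‖Σ_k P_k a_k P_k^⊥‖² ≤ Σ_k c_k. -/
/-!
Write `T = ∑ₖ Pₖ aₖ Pₖ^⊥`. Orthogonality of the `Pₖ` kills the cross terms of `T⋆T`, and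
`Pₖ ≤ 1` gives `T⋆T ≤ ∑ₖ (aₖPₖ^⊥)⋆(aₖPₖ^⊥)`, so `‖T‖² = ‖T⋆T‖ ≤ ∑ₖ ‖aₖPₖ^⊥‖²`. Finally
`‖aₖPₖ^⊥‖² = ‖Pₖ^⊥ aₖ⋆ aₖ Pₖ^⊥‖ = cₖ ‖Pₖ^⊥‖ ≤ cₖ` by the C⋆-identity.
-/

open Finset

theorem star_sum_mul_sum_of_mul_eq_zero {R ι : Type*} [NonUnitalRing R] [StarRing R]
    {p : ι → R} (hp : ∀ k, IsStarProjection (p k)) (horth : ∀ j k, j ≠ k → p j * p k = 0)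
    (x : ι → R) (s : Finset ι) :
    star (∑ k ∈ s, p k * x k) * ∑ k ∈ s, p k * x k = ∑ k ∈ s, star (x k) * p k * x k := by
  rw [star_sum, sum_mul_sum]
  refine sum_congr rfl fun j hj => ?_
  have hterm : ∀ k, star (p j * x j) * (p k * x k) = star (x j) * (p j * p k) * x k := by
    intro k
    simp only [star_mul, (hp j).isSelfAdjoint.star_eq, mul_assoc]
  rw [sum_eq_single_of_mem j hj fun k _ hkj => by rw [hterm, horth j k hkj.symm, mul_zero, zero_mul],
    hterm, (hp j).isIdempotentElem.eq]

section CStarAlgebra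

variable {A : Type*} [CStarAlgebra A]

theorem IsSelfAdjoint.norm_mul_sq {q : A} (hq : IsSelfAdjoint q) (x : A) :
    ‖x * q‖ ^ 2 = ‖q * (star x * x) * q‖ := by
  rw [sq, ← CStarRing.norm_star_mul_self, star_mul, hq.star_eq, mul_assoc, mul_assoc, mul_assoc]

theorem norm_sum_mul_sq_le_sum_norm_sq [PartialOrder A] [StarOrderedRing A] {ι : Type*}
    {p : ι → A} (hp : ∀ k, IsStarProjection (p k)) (horth : ∀ j k, j ≠ k → p j * p k = 0)
    (x : ι → A) (s : Finset ι) :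
    ‖∑ k ∈ s, p k * x k‖ ^ 2 ≤ ∑ k ∈ s, ‖x k‖ ^ 2 := by
  set T := ∑ k ∈ s, p k * x k
  have hle : star T * T ≤ algebraMap ℝ A (∑ k ∈ s, ‖x k‖ ^ 2) := by
    rw [star_sum_mul_sum_of_mul_eq_zero hp horth, map_sum]
    refine sum_le_sum fun k _ => ?_
    calc star (x k) * p k * x k ≤ star (x k) * 1 * x k :=
          star_left_conjugate_le_conjugate (hp k).le_one _
      _ ≤ algebraMap ℝ A (‖x k‖ ^ 2) := by
          rw [mul_one]; exact CStarAlgebra.star_mul_le_algebraMap_norm_sq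
  rw [sq, ← CStarRing.norm_star_mul_self]
  exact (CStarAlgebra.norm_le_iff_le_algebraMap _ (by positivity) (star_mul_self_nonneg T)).mpr hle

end CStarAlgebra

/-- column estimate: if `P k` are mutually orthogonal projections
and `(1 - P k) (a k)* (a k) (1 - P k) = c k • (1 - P k)` with `c k ≥ 0`, then
`‖∑ k in s, P k * a k * (1 - P k)‖² ≤ ∑ k in s, c k`. -/
theorem norm_sq_sum_column_le {H : Type*} [NormedAddCommGroup H]
    [InnerProductSpace ℂ H] [CompleteSpace H] {I : Type*}
    (P : I → H →L[ℂ] H) (hPsa : ∀ k, IsSelfAdjoint (P k))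
    (hPidem : ∀ k, IsIdempotentElem (P k))
    (hPorth : ∀ j k, j ≠ k → P j * P k = 0)
    (a : I → H →L[ℂ] H) (c : I → ℝ) (hc : ∀ k, 0 ≤ c k)
    (hdiag : ∀ k, (1 - P k) * (star (a k) * a k) * (1 - P k)
      = (c k : ℂ) • (1 - P k))
    (s : Finset I) :
    ‖∑ k ∈ s, P k * a k * (1 - P k)‖ ^ 2 ≤ ∑ k ∈ s, c k := by
  have hP : ∀ k, IsStarProjection (P k) := fun k => ⟨hPidem k, hPsa k⟩
  simp only [mul_assoc]
  refine (norm_sum_mul_sq_le_sum_norm_sq hP hPorth _ s).trans (sum_le_sum fun k _ => ?_)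
  have hQ : IsStarProjection (1 - P k) := (hP k).one_sub
  calc ‖a k * (1 - P k)‖ ^ 2 = c k * ‖1 - P k‖ := by
        rw [hQ.isSelfAdjoint.norm_mul_sq, hdiag, norm_smul, Complex.norm_real,
          Real.norm_of_nonneg (hc k)]
    _ ≤ c k := mul_le_of_le_one_right (hc k) (hQ.norm_le _)
end

section
/- Let H be a complex Hilbert space, (P_k)_{k∈I} mutually orthogonal projections, and (a_k) a finitely supported family of bounded operators with pairwise orthogonal ranges conditions as follows: P_k^⊥ a_k a_k^* P_k^⊥ = c_k · P_k^⊥ for nonnegative reals c_k, where P_k^⊥ = 1 − P_k. Then ‖Σ_k P_k^⊥ a_k P_k‖² ≤ Σ_k c_k. -/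
/-! With `x k = (1 - P k) * a k * P k`, orthogonality of the `P k` kills the cross terms of
`T * star T` for `T = ∑ x k`, so the C*-identity gives `‖T‖² ≤ ∑ ‖x k‖²`; and
`‖x k‖² ≤ ‖(1 - P k) * a k‖² = ‖(1 - P k) * (a k * star (a k)) * (1 - P k)‖ ≤ c k`. -/

section CStarRing

variable {A : Type*} [NonUnitalNormedRing A] [StarRing A] [CStarRing A]

theorem sq_norm_sum_le_sum_sq_norm_of_mul_star_eq_zero {ι : Type*} {s : Finset ι} {x : ι → A}
    (h : ∀ j ∈ s, ∀ k ∈ s, j ≠ k → x j * star (x k) = 0) :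
    ‖∑ k ∈ s, x k‖ ^ 2 ≤ ∑ k ∈ s, ‖x k‖ ^ 2 :=
  calc ‖∑ k ∈ s, x k‖ ^ 2 = ‖(∑ k ∈ s, x k) * star (∑ k ∈ s, x k)‖ := by
        rw [CStarRing.norm_self_mul_star, sq]
    _ = ‖∑ k ∈ s, x k * star (x k)‖ := by
        rw [star_sum, Finset.sum_mul_sum]
        exact congrArg norm <| Finset.sum_congr rfl fun j hj =>
          Finset.sum_eq_single_of_mem j hj fun k hk hkj => h j hj k hk hkj.symm
    _ ≤ ∑ k ∈ s, ‖x k * star (x k)‖ := norm_sum_le _ _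
    _ = ∑ k ∈ s, ‖x k‖ ^ 2 := by simp only [CStarRing.norm_self_mul_star, sq]

theorem sq_norm_mul_mul_le_of_isStarProjection {p q : A} (hp : IsStarProjection p)
    (hq : IsSelfAdjoint q) (a : A) : ‖q * a * p‖ ^ 2 ≤ ‖q * (a * star a) * q‖ :=
  calc ‖q * a * p‖ ^ 2 ≤ ‖q * a‖ ^ 2 := by
        gcongr
        exact (norm_mul_le _ _).trans (mul_le_of_le_one_right (norm_nonneg _) (hp.norm_le p))
    _ = ‖q * (a * star a) * q‖ := by
        rw [sq, ← CStarRing.norm_self_mul_star, star_mul, hq.star_eq]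
        simp only [mul_assoc]

end CStarRing

/-- row estimate: if `P k` are mutually orthogonal projections
and `(1 - P k) (a k) (a k)* (1 - P k) = c k • (1 - P k)` with `c k ≥ 0`, then
`‖∑ k in s, (1 - P k) * a k * P k‖² ≤ ∑ k in s, c k`. -/
theorem norm_sq_sum_row_le {H : Type*} [NormedAddCommGroup H]
    [InnerProductSpace ℂ H] [CompleteSpace H] {I : Type*}
    (P : I → H →L[ℂ] H) (hPsa : ∀ k, IsSelfAdjoint (P k))
    (hPidem : ∀ k, IsIdempotentElem (P k))
    (hPorth : ∀ j k, j ≠ k → P j * P k = 0)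
    (a : I → H →L[ℂ] H) (c : I → ℝ) (hc : ∀ k, 0 ≤ c k)
    (hdiag : ∀ k, (1 - P k) * (a k * star (a k)) * (1 - P k)
      = (c k : ℂ) • (1 - P k))
    (s : Finset I) :
    ‖∑ k ∈ s, (1 - P k) * a k * P k‖ ^ 2 ≤ ∑ k ∈ s, c k := by
  have hP : ∀ k, IsStarProjection (P k) := fun k => ⟨hPidem k, hPsa k⟩
  calc ‖∑ k ∈ s, (1 - P k) * a k * P k‖ ^ 2 ≤ ∑ k ∈ s, ‖(1 - P k) * a k * P k‖ ^ 2 := by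
        refine sq_norm_sum_le_sum_sq_norm_of_mul_star_eq_zero fun j _ k _ hjk => ?_
        rw [star_mul, (hPsa k).star_eq, mul_assoc _ (P j), ← mul_assoc (P j), hPorth j k hjk,
          zero_mul, mul_zero]
    _ ≤ ∑ k ∈ s, c k := Finset.sum_le_sum fun k _ => by
        refine (sq_norm_mul_mul_le_of_isStarProjection (hP k) (hP k).one_sub.isSelfAdjoint
          (a k)).trans ?_
        rw [hdiag k, norm_smul, Complex.norm_of_nonneg (hc k)]
        exact mul_le_of_le_one_right (hc k) ((hP k).one_sub.norm_le _)
end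

section
/- Let A be a C*-algebra and x ∈ A. Then for every natural number n ≥ 1, ‖x‖^(2n) = ‖(x*x)^n‖. Consequently, if π : A → B and ρ : A → C are *-homomorphisms to C*-algebras and x ∈ A satisfies ‖π((x*x)^n)‖ ≤ C(n)·‖ρ((x*x)^n)‖ for all n with C(n) of polynomial growth, then ‖π(x)‖ ≤ ‖ρ(x)‖. -/
lemma sa_norm_pow {E : Type*} [NormedRing E] [StarRing E] [CStarRing E]
    {a : E} (ha : IsSelfAdjoint a) (n : ℕ) (hn : 1 ≤ n) : ‖a ^ n‖ = ‖a‖ ^ n := by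
  have upper : ‖a ^ n‖ ≤ ‖a‖ ^ n := norm_pow_le' a hn
  refine le_antisymm upper ?_
  by_cases h0 : ‖a‖ = 0
  · have : a = 0 := norm_eq_zero.mp h0
    simp [this, h0, zero_pow (by omega : n ≠ 0)]
  · have hpos : 0 < ‖a‖ := lt_of_le_of_ne (norm_nonneg a) (Ne.symm h0)
    have hk : n < 2 ^ n := Nat.lt_two_pow_self (n := n)
    have h2 : ‖a ^ 2 ^ n‖ = ‖a‖ ^ 2 ^ n := by
      have h := congrArg NNReal.toReal (ha.nnnorm_pow_two_pow n)
      simpa using h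
    have hsplit : a ^ 2 ^ n = a ^ n * a ^ (2 ^ n - n) := by
      rw [← pow_add]; congr 1; omega
    have hle : ‖a‖ ^ 2 ^ n ≤ ‖a ^ n‖ * ‖a‖ ^ (2 ^ n - n) := by
      calc ‖a‖ ^ 2 ^ n = ‖a ^ 2 ^ n‖ := h2.symm
        _ = ‖a ^ n * a ^ (2 ^ n - n)‖ := by rw [hsplit]
        _ ≤ ‖a ^ n‖ * ‖a ^ (2 ^ n - n)‖ := norm_mul_le _ _
        _ ≤ ‖a ^ n‖ * ‖a‖ ^ (2 ^ n - n) := by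
            exact mul_le_mul_of_nonneg_left (norm_pow_le' a (by omega)) (norm_nonneg _)
    have hsplit' : ‖a‖ ^ (2 ^ n) = ‖a‖ ^ n * ‖a‖ ^ (2 ^ n - n) := by
      rw [← pow_add]; congr 1; omega
    have hppos : 0 < ‖a‖ ^ (2 ^ n - n) := pow_pos hpos _
    rw [hsplit'] at hle
    exact le_of_mul_le_mul_right hle hppos

lemma key {E : Type*} [NormedRing E] [StarRing E] [CStarRing E] (y : E)
    (n : ℕ) (hn : 1 ≤ n) : ‖y‖ ^ (2 * n) = ‖(star y * y) ^ n‖ := by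
  rw [sa_norm_pow (IsSelfAdjoint.star_mul_self y) n hn,
    CStarRing.norm_star_mul_self, ← sq, ← pow_mul]

/-- in a C*-algebra, `‖x‖^(2n) = ‖(x*x)^n‖` for all `n ≥ 1`;
consequently, if `π` and `ρ` are *-homomorphisms with
`‖π((x*x)^n)‖ ≤ C(n)·‖ρ((x*x)^n)‖` for all `n ≥ 1`, where `C` has polynomial
growth (`1 ≤ C(n) ≤ K·n^d`), then `‖π(x)‖ ≤ ‖ρ(x)‖`. -/
theorem norm_pow_trick {A B C' : Type*}
    [NormedRing A] [StarRing A] [CStarRing A] [CompleteSpace A]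
    [NormedAlgebra ℂ A] [StarModule ℂ A]
    [NormedRing B] [StarRing B] [CStarRing B] [CompleteSpace B]
    [NormedAlgebra ℂ B] [StarModule ℂ B]
    [NormedRing C'] [StarRing C'] [CStarRing C'] [CompleteSpace C']
    [NormedAlgebra ℂ C'] [StarModule ℂ C']
    (x : A) (π : A →⋆ₐ[ℂ] B) (ρ : A →⋆ₐ[ℂ] C')
    (Cf : ℕ → ℝ) (hCf1 : ∀ n, 1 ≤ Cf n)
    (K : ℝ) (d : ℕ) (hK : 0 < K) (hCf : ∀ n : ℕ, 1 ≤ n → Cf n ≤ K * (n : ℝ) ^ d)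
    (hbound : ∀ n : ℕ, 1 ≤ n →
      ‖π ((star x * x) ^ n)‖ ≤ Cf n * ‖ρ ((star x * x) ^ n)‖) :
    (∀ n : ℕ, 1 ≤ n → ‖x‖ ^ (2 * n) = ‖(star x * x) ^ n‖) ∧
      ‖π x‖ ≤ ‖ρ x‖ := by
  refine ⟨fun n hn => key x n hn, ?_⟩
  have hπ : ∀ n : ℕ, 1 ≤ n → ‖π x‖ ^ (2 * n) = ‖π ((star x * x) ^ n)‖ := by
    intro n hn
    rw [key (π x) n hn, ← map_star, ← map_mul, ← map_pow]
  have hρ : ∀ n : ℕ, 1 ≤ n → ‖ρ x‖ ^ (2 * n) = ‖ρ ((star x * x) ^ n)‖ := by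
    intro n hn
    rw [key (ρ x) n hn, ← map_star, ← map_mul, ← map_pow]
  by_contra hcon
  push_neg at hcon
  set a := ‖π x‖ with ha
  set b := ‖ρ x‖ with hb
  have hapos : 0 < a := lt_of_le_of_lt (norm_nonneg _) hcon
  set q : ℝ := b / a with hq
  have hq0 : 0 ≤ q := div_nonneg (norm_nonneg _) hapos.le
  have hq1 : q < 1 := (div_lt_one hapos).mpr hcon
  have hqsq : q ^ 2 < 1 := pow_lt_one₀ hq0 hq1 (by norm_num)
  have hmain : ∀ n : ℕ, 1 ≤ n → 1 ≤ K * ((n : ℝ) ^ d * (q ^ 2) ^ n) := by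
    intro n hn
    have h1 : a ^ (2 * n) ≤ K * (n : ℝ) ^ d * b ^ (2 * n) := by
      calc a ^ (2 * n) = ‖π ((star x * x) ^ n)‖ := hπ n hn
        _ ≤ Cf n * ‖ρ ((star x * x) ^ n)‖ := hbound n hn
        _ = Cf n * b ^ (2 * n) := by rw [hρ n hn]
        _ ≤ K * (n : ℝ) ^ d * b ^ (2 * n) := by
            refine mul_le_mul_of_nonneg_right (hCf n hn) ?_
            positivity
    have hbqa : b = q * a := by
      rw [hq, div_mul_cancel₀ _ hapos.ne']
    rw [hbqa, mul_pow] at h1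
    have h2 : a ^ (2 * n) * 1 ≤ a ^ (2 * n) * (K * ((n : ℝ) ^ d * (q ^ 2) ^ n)) := by
      rw [mul_one]
      calc a ^ (2 * n) ≤ K * (n : ℝ) ^ d * (q ^ (2 * n) * a ^ (2 * n)) := h1
        _ = a ^ (2 * n) * (K * ((n : ℝ) ^ d * (q ^ 2) ^ n)) := by
            rw [pow_mul]; ring
    exact le_of_mul_le_mul_left h2 (pow_pos hapos _)
  have hlim : Filter.Tendsto (fun n : ℕ => K * ((n : ℝ) ^ d * (q ^ 2) ^ n))
      Filter.atTop (nhds 0) := by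
    have := (tendsto_pow_const_mul_const_pow_of_lt_one d (by positivity : (0:ℝ) ≤ q ^ 2) hqsq).const_mul K
    simpa using this
  have hev : ∀ᶠ n : ℕ in Filter.atTop, K * ((n : ℝ) ^ d * (q ^ 2) ^ n) < 1 :=
    hlim.eventually_lt_const zero_lt_one
  obtain ⟨n, hn1, hnlt⟩ := ((Filter.eventually_ge_atTop 1).and hev).exists
  exact absurd (hmain n hn1) (not_le.mpr hnlt)
end
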